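/- Let g(s) = a₀ + a₁ s^{α₁} + ⋯ + a_N s^{α_N} for s ≥ 0, with strictly positive coefficients a₀, …, a_N and exponents 0 < α₁ < ⋯ < α_N, let s(ξ) be the unique non-negative solution of s·g(s) = ξ, and set K₁(ξ) = 1/g(s(ξ)). Then there exist constants d₁, d₂ with 0 < d₁ ≤ d₂ such that d₁/(1 + ξ)^a ≤ K₁(ξ) ≤ d₂/(1 + ξ)^a for all ξ ≥ 0, where a = α_N/(α_N + 1) ∈ (0, 1). -/

import Mathlib

/-!
On `s ≥ 0` every power `s ^ α i` lies below `(1 + s) ^ α_N`, while the two extreme terms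
`a₀ + a_N s ^ α_N` already dominate a multiple of `(1 + s) ^ α_N`; so `g s` is comparable to
`(1 + s) ^ α_N`. With `s = S ξ` we have `ξ = s g(s)`, hence `1 + ξ` is comparable to
`(1 + s) ^ (α_N + 1)`, and raising to the power `α_N / (α_N + 1)` makes `(1 + ξ) ^ a` comparable
to `(1 + s) ^ α_N`, i.e. to `g s = 1 / K₁ ξ`.
-/

open Real Set

section RpowBounds

variable {s p β : ℝ}

theorem rpow_le_one_add_rpow_of_le {q : ℝ} (hs : 0 ≤ s) (hp : 0 ≤ p) (hpq : p ≤ q) :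
    s ^ p ≤ (1 + s) ^ q :=
  (rpow_le_rpow hs (by linarith) hp).trans (rpow_le_rpow_of_exponent_le (by linarith) hpq)

theorem one_add_rpow_le_two_rpow_mul (hs : 0 ≤ s) (hp : 0 ≤ p) :
    (1 + s) ^ p ≤ 2 ^ p * (1 + s ^ p) := by
  rcases le_total s 1 with hs1 | hs1
  · calc (1 + s) ^ p ≤ 2 ^ p := rpow_le_rpow (by linarith) (by linarith) hp
      _ ≤ 2 ^ p * (1 + s ^ p) := le_mul_of_one_le_right (by positivity)
          (le_add_of_nonneg_right (by positivity))
  · calc (1 + s) ^ p ≤ (2 * s) ^ p := rpow_le_rpow (by linarith) (by linarith) hp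
      _ = 2 ^ p * s ^ p := mul_rpow zero_le_two hs
      _ ≤ 2 ^ p * (1 + s ^ p) := by gcongr; linarith

theorem one_add_mul_one_add_rpow_le (hs : 0 ≤ s) (hβ : 0 ≤ β) :
    1 + s * (1 + s) ^ β ≤ (1 + s) ^ (β + 1) := by
  rw [rpow_add_one (by linarith)]
  nlinarith [one_le_rpow (by linarith : 1 ≤ 1 + s) hβ]

theorem one_add_rpow_succ_le_two_rpow_mul (hs : 0 ≤ s) (hβ : 0 ≤ β) :
    (1 + s) ^ (β + 1) ≤ 2 ^ (β + 1) * (1 + s * (1 + s) ^ β) := by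
  have hpow : s ^ (β + 1) ≤ s * (1 + s) ^ β := by
    rw [rpow_add_one' hs (by linarith), mul_comm]
    exact mul_le_mul_of_nonneg_left (rpow_le_rpow hs (by linarith) hβ) hs
  calc (1 + s) ^ (β + 1) ≤ 2 ^ (β + 1) * (1 + s ^ (β + 1)) :=
        one_add_rpow_le_two_rpow_mul hs (by linarith)
    _ ≤ 2 ^ (β + 1) * (1 + s * (1 + s) ^ β) := by gcongr

end RpowBounds

section GeneralizedPolynomial

variable {ι : Type*} [Fintype ι] {a α : ι → ℝ} {β s : ℝ}

theorem sum_mul_rpow_le_sum_mul_one_add_rpow (ha : ∀ k, 0 ≤ a k) (hα : ∀ k, α k ∈ Icc 0 β)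
    (hs : 0 ≤ s) : ∑ k, a k * s ^ α k ≤ (∑ k, a k) * (1 + s) ^ β := by
  rw [Finset.sum_mul]
  exact Finset.sum_le_sum fun k _ =>
    mul_le_mul_of_nonneg_left (rpow_le_one_add_rpow_of_le hs (hα k).1 (hα k).2) (ha k)

theorem min_mul_one_add_rpow_le_sum_mul_rpow {i j : ι} (hij : i ≠ j) (ha : ∀ k, 0 ≤ a k)
    (hαi : α i = 0) (hαj : α j = β) (hs : 0 ≤ s) :
    min (a i) (a j) * (1 + s ^ β) ≤ ∑ k, a k * s ^ α k := by
  classical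
  have hpair : a i + a j * s ^ β ≤ ∑ k, a k * s ^ α k := by
    have := Finset.sum_le_sum_of_subset_of_nonneg (f := fun k => a k * s ^ α k)
      (Finset.subset_univ {i, j}) fun k _ _ => mul_nonneg (ha k) (rpow_nonneg hs _)
    rwa [Finset.sum_pair hij, hαi, hαj, rpow_zero, mul_one] at this
  nlinarith [min_le_left (a i) (a j), min_le_right (a i) (a j), rpow_nonneg hs β]

theorem exists_bounds_sum_mul_rpow {i j : ι} (hij : i ≠ j) (ha : ∀ k, 0 ≤ a k)
    (hai : 0 < a i) (haj : 0 < a j) (hα : ∀ k, α k ∈ Icc 0 β) (hαi : α i = 0) (hαj : α j = β) :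
    ∃ c C : ℝ, 0 < c ∧ 0 < C ∧ ∀ s, 0 ≤ s →
      c * (1 + s) ^ β ≤ ∑ k, a k * s ^ α k ∧ ∑ k, a k * s ^ α k ≤ C * (1 + s) ^ β := by
  have hβ : 0 ≤ β := hαj ▸ (hα j).1
  refine ⟨min (a i) (a j) / 2 ^ β, ∑ k, a k, by positivity,
    hai.trans_le (Finset.single_le_sum (fun k _ => ha k) (Finset.mem_univ i)), fun s hs => ⟨?_,
    sum_mul_rpow_le_sum_mul_one_add_rpow ha hα hs⟩⟩
  calc min (a i) (a j) / 2 ^ β * (1 + s) ^ β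
      ≤ min (a i) (a j) / 2 ^ β * (2 ^ β * (1 + s ^ β)) := by
        gcongr; exact one_add_rpow_le_two_rpow_mul hs hβ
    _ = min (a i) (a j) * (1 + s ^ β) := by field_simp
    _ ≤ ∑ k, a k * s ^ α k := min_mul_one_add_rpow_le_sum_mul_rpow hij ha hαi hαj hs

end GeneralizedPolynomial

section Inversion

variable {g : ℝ → ℝ} {β c C : ℝ}

theorem bounds_one_add_mul_of_bounds (hβ : 0 ≤ β) (hc : 0 < c)
    (hg : ∀ s, 0 ≤ s → c * (1 + s) ^ β ≤ g s ∧ g s ≤ C * (1 + s) ^ β) {s : ℝ} (hs : 0 ≤ s) :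
    min 1 c / 2 ^ (β + 1) * (1 + s) ^ (β + 1) ≤ 1 + s * g s ∧
      1 + s * g s ≤ max 1 C * (1 + s) ^ (β + 1) := by
  obtain ⟨hlow, hup⟩ := hg s hs
  have hP : 0 ≤ s * (1 + s) ^ β := by positivity
  constructor
  · calc min 1 c / 2 ^ (β + 1) * (1 + s) ^ (β + 1)
        ≤ min 1 c / 2 ^ (β + 1) * (2 ^ (β + 1) * (1 + s * (1 + s) ^ β)) := by
          gcongr; exact one_add_rpow_succ_le_two_rpow_mul hs hβ
      _ = min 1 c + min 1 c * (s * (1 + s) ^ β) := by field_simp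
      _ ≤ 1 + s * g s := by
          have : min 1 c * (s * (1 + s) ^ β) ≤ s * g s := calc
            _ ≤ c * (s * (1 + s) ^ β) := mul_le_mul_of_nonneg_right (min_le_right 1 c) hP
            _ = s * (c * (1 + s) ^ β) := by ring
            _ ≤ s * g s := mul_le_mul_of_nonneg_left hlow hs
          linarith [min_le_left 1 c]
  · calc 1 + s * g s ≤ max 1 C * (1 + s * (1 + s) ^ β) := by
          have : s * g s ≤ max 1 C * (s * (1 + s) ^ β) := calc
            _ ≤ s * (C * (1 + s) ^ β) := mul_le_mul_of_nonneg_left hup hs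
            _ = C * (s * (1 + s) ^ β) := by ring
            _ ≤ max 1 C * (s * (1 + s) ^ β) := mul_le_mul_of_nonneg_right (le_max_right 1 C) hP
          linarith [le_max_left 1 C]
      _ ≤ max 1 C * (1 + s) ^ (β + 1) :=
          mul_le_mul_of_nonneg_left (one_add_mul_one_add_rpow_le hs hβ)
            (zero_le_one.trans (le_max_left 1 C))

theorem rpow_add_one_rpow_div_add_one {t : ℝ} (ht : 0 ≤ t) (hβ : 0 ≤ β) :
    (t ^ (β + 1)) ^ (β / (β + 1)) = t ^ β := by
  rw [← rpow_mul ht, mul_div_cancel₀ _ (by linarith)]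

theorem mul_rpow_le_rpow_div_add_one {k t x : ℝ} (hk : 0 ≤ k) (ht : 0 ≤ t) (hβ : 0 ≤ β)
    (h : k * t ^ (β + 1) ≤ x) : k ^ (β / (β + 1)) * t ^ β ≤ x ^ (β / (β + 1)) := by
  rw [← rpow_add_one_rpow_div_add_one ht hβ, ← mul_rpow hk (by positivity)]
  exact rpow_le_rpow (by positivity) h (by positivity)

theorem rpow_div_add_one_le_mul_rpow {k t x : ℝ} (hk : 0 ≤ k) (ht : 0 ≤ t) (hβ : 0 ≤ β)
    (hx : 0 ≤ x) (h : x ≤ k * t ^ (β + 1)) : x ^ (β / (β + 1)) ≤ k ^ (β / (β + 1)) * t ^ β := by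
  rw [← rpow_add_one_rpow_div_add_one ht hβ, ← mul_rpow hk (by positivity)]
  exact rpow_le_rpow hx h (by positivity)

theorem exists_bounds_inv_of_bounds (hβ : 0 ≤ β) (hc : 0 < c) (hC : 0 < C)
    (hg : ∀ s, 0 ≤ s → c * (1 + s) ^ β ≤ g s ∧ g s ≤ C * (1 + s) ^ β) :
    ∃ d₁ d₂ : ℝ, 0 < d₁ ∧ d₁ ≤ d₂ ∧ ∀ s, 0 ≤ s →
      d₁ / (1 + s * g s) ^ (β / (β + 1)) ≤ 1 / g s ∧
        1 / g s ≤ d₂ / (1 + s * g s) ^ (β / (β + 1)) := by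
  set k₁ := min 1 c / 2 ^ (β + 1)
  set k₂ := max 1 C
  have hk₁ : 0 < k₁ := by positivity
  have hk₂ : 0 < k₂ := zero_lt_one.trans_le (le_max_left 1 C)
  have bounds : ∀ s, 0 ≤ s → k₁ ^ (β / (β + 1)) / C / (1 + s * g s) ^ (β / (β + 1)) ≤ 1 / g s ∧
      1 / g s ≤ k₂ ^ (β / (β + 1)) / c / (1 + s * g s) ^ (β / (β + 1)) := by
    intro s hs
    obtain ⟨hlow, hup⟩ := hg s hs
    obtain ⟨hξlow, hξup⟩ := bounds_one_add_mul_of_bounds hβ hc hg hs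
    have hP : 0 < (1 + s) ^ β := by positivity
    have hg0 : 0 < g s := (mul_pos hc hP).trans_le hlow
    have hξ : 0 < 1 + s * g s := add_pos_of_pos_of_nonneg one_pos (mul_nonneg hs hg0.le)
    have hXlow := mul_rpow_le_rpow_div_add_one hk₁.le (by linarith) hβ hξlow
    have hXup := rpow_div_add_one_le_mul_rpow hk₂.le (by linarith) hβ hξ.le hξup
    have hX : 0 < (1 + s * g s) ^ (β / (β + 1)) := rpow_pos_of_pos hξ _
    have hk₁a : 0 < k₁ ^ (β / (β + 1)) := by positivity
    constructor
    · rw [div_div, div_le_div_iff₀ (by positivity) hg0]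
      nlinarith
    · rw [div_div, div_le_div_iff₀ hg0 (by positivity)]
      nlinarith
  refine ⟨k₁ ^ (β / (β + 1)) / C, k₂ ^ (β / (β + 1)) / c, by positivity, ?_, bounds⟩
  simpa only [zero_mul, add_zero, one_rpow, div_one] using
    (bounds 0 le_rfl).1.trans (bounds 0 le_rfl).2

end Inversion

/-- Two-sided power-law bound for the Forchheimer coefficient `K₁(ξ) = 1/g(s(ξ))`:
there exist `0 < d₁ ≤ d₂` with `d₁/(1+ξ)^a ≤ K₁(ξ) ≤ d₂/(1+ξ)^a` for all `ξ ≥ 0`,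
where `a = α_N/(α_N + 1) ∈ (0,1)`. -/
theorem forchheimer_K1_two_sided_bound (N : ℕ) (hN : 1 ≤ N)
    (a α : Fin (N + 1) → ℝ)
    (ha : ∀ i, 0 < a i) (hα0 : α 0 = 0) (hαmono : StrictMono α)
    (g : ℝ → ℝ) (hg : ∀ s : ℝ, g s = ∑ i, a i * s ^ α i)
    (S : ℝ → ℝ)
    (hS : ∀ ξ ∈ Ici (0 : ℝ), 0 ≤ S ξ ∧ S ξ * g (S ξ) = ξ ∧
      ∀ t : ℝ, 0 ≤ t → t * g t = ξ → t = S ξ)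
    (K₁ : ℝ → ℝ) (hK : ∀ ξ : ℝ, K₁ ξ = 1 / g (S ξ)) :
    α (Fin.last N) / (α (Fin.last N) + 1) ∈ Ioo (0 : ℝ) 1 ∧
      ∃ d₁ d₂ : ℝ, 0 < d₁ ∧ d₁ ≤ d₂ ∧ ∀ ξ : ℝ, 0 ≤ ξ →
        d₁ / (1 + ξ) ^ (α (Fin.last N) / (α (Fin.last N) + 1)) ≤ K₁ ξ ∧
          K₁ ξ ≤ d₂ / (1 + ξ) ^ (α (Fin.last N) / (α (Fin.last N) + 1)) := by
  set β := α (Fin.last N)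
  have hlast : (0 : Fin (N + 1)) < Fin.last N := by
    rw [Fin.lt_def]; simp only [Fin.val_zero, Fin.val_last]; omega
  have hβ : 0 < β := hα0 ▸ hαmono hlast
  have hα : ∀ i, α i ∈ Icc 0 β :=
    fun i => ⟨hα0 ▸ hαmono.monotone (Fin.zero_le i), hαmono.monotone (Fin.le_last i)⟩
  obtain ⟨c, C, hc, hC, hpoly⟩ := exists_bounds_sum_mul_rpow hlast.ne (fun k => (ha k).le)
    (ha 0) (ha _) hα hα0 rfl
  obtain ⟨d₁, d₂, hd₁, hd₁₂, hd⟩ :=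
    exists_bounds_inv_of_bounds (g := g) hβ.le hc hC (by simpa only [hg] using hpoly)
  refine ⟨⟨div_pos hβ (by linarith), (div_lt_one (by linarith)).2 (by linarith)⟩,
    d₁, d₂, hd₁, hd₁₂, fun ξ hξ => ?_⟩
  obtain ⟨hS0, hSξ, -⟩ := hS ξ hξ
  simpa only [hK, hSξ] using hd (S ξ) hS0
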